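/- Let I be a school matching instance. The map M ↦ R_M is a lattice isomorphism from the lattice of stable matchings (S(I),≥) onto the lattice of upper-closed subsets of the rotation poset (R(I),⊵) ordered by reverse inclusion. In particular: (i) for every M∈S(I), the set R_M is upper-closed; (ii) for every upper-closed R⊆R(I) there exists a (unique) stable matching M_R with R_{M_R}=R; and (iii) for all M,M'∈S(I), R_{M∧M'} = R_M ∪ R_{M'} and R_{M∨M'} = R_M ∩ R_{M'}. -/

import Mathlib

open Classical
open scoped ENNReal

noncomputable section

namespace SM

/-- A school matching instance: students `A`, schools `B`, strict preference
orders over the other side plus the outside option `∅` (encoded as `none`),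
and quotas `q b ≤ |A|`. -/
structure SchoolInstance (A B : Type) [Fintype A] [Fintype B] where
  prefA : A → Option B → Option B → Prop
  prefB : B → Option A → Option A → Prop
  prefA_sto : ∀ a, IsStrictTotalOrder (Option B) (prefA a)
  prefB_sto : ∀ b, IsStrictTotalOrder (Option A) (prefB b)
  q : B → ℕ
  q_le : ∀ b, q b ≤ Fintype.card A

variable {A B : Type} [Fintype A] [Fintype B] [DecidableEq A] [DecidableEq B]

/-- A matching: every student is assigned a school or the outside option, and
each school receives at most `q b` students.  (A school is implicitly paired
with the outside option exactly when it has strictly fewer than `q b`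
students, and a student is paired with the outside option exactly when it has
no school; this determines the set of pairs of the matching.) -/
structure Matching {A B : Type} [Fintype A] [Fintype B] (I : SchoolInstance A B) where
  toFun : A → Option B
  quota : ∀ b : B, (Finset.univ.filter fun a => toFun a = some b).card ≤ I.q b

instance (I : SchoolInstance A B) : Nonempty (Matching I) := by
  refine ⟨⟨fun _ => none, fun b => ?_⟩⟩
  have h : (Finset.univ.filter fun _ : A => (none : Option B) = some b) = ∅ :=
    Finset.filter_false_of_mem (by intro a _; simp)
  rw [h, Finset.card_empty]
  exact Nat.zero_le _

/-- The students assigned to school `b`. -/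
def assignedTo (I : SchoolInstance A B) (M : Matching I) (b : B) : Finset A :=
  Finset.univ.filter fun a => M.toFun a = some b

/-- School `b` has strictly fewer than `q b` students, i.e. is also paired
with the outside option. -/
def hasSlack (I : SchoolInstance A B) (M : Matching I) (b : B) : Prop :=
  (assignedTo I M b).card < I.q b

/-- `x ∈ M(b)`: the partners of school `b` (students assigned to it, plus the
outside option when it is under quota). -/
def inPartners (I : SchoolInstance A B) (M : Matching I) (b : B) (x : Option A) : Prop :=
  (∃ a : A, x = some a ∧ M.toFun a = some b) ∨ (x = none ∧ hasSlack I M b)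

/-- `M(b)` as a set. -/
def partnersSet (I : SchoolInstance A B) (M : Matching I) (b : B) : Set (Option A) :=
  {x | inPartners I M b x}

/-- The pair `ab` blocks `M`. -/
def BlocksPair (I : SchoolInstance A B) (M : Matching I) (a : A) (b : B) : Prop :=
  I.prefA a (some b) (M.toFun a) ∧ ∃ x, inPartners I M b x ∧ I.prefB b (some a) x

/-- Student `a` blocks `M` (prefers the outside option to its partner). -/
def BlocksStudent (I : SchoolInstance A B) (M : Matching I) (a : A) : Prop :=
  I.prefA a none (M.toFun a)

/-- School `b` blocks `M` (prefers the outside option to one of its partners). -/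
def BlocksSchool (I : SchoolInstance A B) (M : Matching I) (b : B) : Prop :=
  ∃ a : A, M.toFun a = some b ∧ I.prefB b none (some a)

/-- Stability: no blocking pair and no blocking agent. -/
def Stable (I : SchoolInstance A B) (M : Matching I) : Prop :=
  (¬ ∃ a b, BlocksPair I M a b) ∧ (¬ ∃ a, BlocksStudent I M a) ∧ (¬ ∃ b, BlocksSchool I M b)

/-- `M ≥ M'`: every student weakly prefers `M` to `M'`. -/
def matGE (I : SchoolInstance A B) (M M' : Matching I) : Prop :=
  ∀ a : A, M.toFun a = M'.toFun a ∨ I.prefA a (M.toFun a) (M'.toFun a)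

/-- `M' < M` in the student order. -/
def matLT (I : SchoolInstance A B) (M' M : Matching I) : Prop :=
  matGE I M M' ∧ M'.toFun ≠ M.toFun

/-- `M'` is an immediate predecessor of `M` in `(S(I), ≥)`. -/
def ImmPred (I : SchoolInstance A B) (M' M : Matching I) : Prop :=
  Stable I M' ∧ Stable I M ∧ matLT I M' M ∧
    ¬ ∃ M'' : Matching I, Stable I M'' ∧ matLT I M' M'' ∧ matLT I M'' M

/-- The type in which rotations live: pairs `(ρ₊, ρ₋)` of sets of
student/school pairs (with the outside option allowed on either side). -/
abbrev Rot (A B : Type) : Type :=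
  Finset (Option A × Option B) × Finset (Option A × Option B)

/-- The set of pairs of a matching: each student with its partner, and each
under-quota school with the outside option. -/
def pairsOf (I : SchoolInstance A B) (M : Matching I) : Finset (Option A × Option B) :=
  Finset.univ.filter fun p =>
    (∃ a : A, p = (some a, M.toFun a)) ∨ (∃ b : B, hasSlack I M b ∧ p = (none, some b))

/-- The rotation `ρ(M, M') = (M ∖ M', M' ∖ M)`. -/
def rho (I : SchoolInstance A B) (M M' : Matching I) : Rot A B :=
  (pairsOf I M \ pairsOf I M', pairsOf I M' \ pairsOf I M)

/-- `R(I)`: the set of all rotations of `I`. -/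
def RotSet (I : SchoolInstance A B) : Set (Rot A B) :=
  {r | ∃ M M' : Matching I, ImmPred I M' M ∧ r = rho I M M'}

/-- `c` is a maximal chain of stable matchings from `M0` down to `M`:
consecutive entries are immediate predecessors. -/
def chainTo (I : SchoolInstance A B) (M0 M : Matching I) (c : List (Matching I)) : Prop :=
  c.head? = some M0 ∧ c.getLast? = some M ∧ (∀ N ∈ c, Stable I N) ∧
    List.Chain' (fun X Y => ImmPred I Y X) c

/-- The set of rotations eliminated along the chain `c`. -/
def chainRots (I : SchoolInstance A B) (c : List (Matching I)) : Set (Rot A B) :=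
  {r | ∃ (i : ℕ) (X Y : Matching I), getElem? c i = some X ∧ getElem? c (i + 1) = some Y ∧ r = rho I X Y}

/-- `ρ` is exposed in `M`. -/
def Exposed (I : SchoolInstance A B) (r : Rot A B) (M : Matching I) : Prop :=
  ∃ M', ImmPred I M' M ∧ r = rho I M M'

/-- The rotation poset `ρ ⊵ ρ'` (relative to the rotation-set map `RM`):
either `ρ = ρ'`, or `ρ ∈ R_M` for every stable `M` in which `ρ'` is exposed. -/
def domRel (I : SchoolInstance A B) (RM : Matching I → Set (Rot A B)) (r r' : Rot A B) : Prop :=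
  r = r' ∨ ∀ M, Stable I M → Exposed I r' M → r ∈ RM M

/-- `ρ ▷ ρ'`. -/
def strictDom (I : SchoolInstance A B) (RM : Matching I → Set (Rot A B)) (r r' : Rot A B) : Prop :=
  domRel I RM r r' ∧ r ≠ r'

/-- `R ⊆ R(I)` is upper-closed in the rotation poset. -/
def UpperClosed (I : SchoolInstance A B) (RM : Matching I → Set (Rot A B))
    (R : Set (Rot A B)) : Prop :=
  R ⊆ RotSet I ∧ ∀ r' ∈ R, ∀ r ∈ RotSet I, domRel I RM r r' → r ∈ R

/-- `N` is the join `M ∨ M'` (least upper bound) in `(S(I), ≥)`. -/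
def IsJoin (I : SchoolInstance A B) (M M' N : Matching I) : Prop :=
  Stable I N ∧ matGE I N M ∧ matGE I N M' ∧
    ∀ P, Stable I P → matGE I P M → matGE I P M' → matGE I P N

/-- `N` is the meet `M ∧ M'` (greatest lower bound) in `(S(I), ≥)`. -/
def IsMeet (I : SchoolInstance A B) (M M' N : Matching I) : Prop :=
  Stable I N ∧ matGE I M N ∧ matGE I M' N ∧
    ∀ P, Stable I P → matGE I M P → matGE I M' P → matGE I N P

/-- `F` is a (nonempty) sublattice of the lattice of stable matchings. -/
def IsSublattice (I : SchoolInstance A B) (F : Set (Matching I)) : Prop :=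
  F.Nonempty ∧ (∀ M ∈ F, Stable I M) ∧
    (∀ M ∈ F, ∀ M' ∈ F, ∃ N ∈ F, IsJoin I M M' N) ∧
    (∀ M ∈ F, ∀ M' ∈ F, ∃ N ∈ F, IsMeet I M M' N)

/-- `ρ ~ ρ'`: the two rotations are eliminated together in every matching of `F`. -/
def rotEquiv (I : SchoolInstance A B) (RM : Matching I → Set (Rot A B))
    (F : Set (Matching I)) (r r' : Rot A B) : Prop :=
  ∀ M ∈ F, (r ∈ RM M ↔ r' ∈ RM M)

/-- The trivial meta-rotation `θ₀^F` of rotations eliminated in every matching of `F`. -/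
def theta0 (I : SchoolInstance A B) (RM : Matching I → Set (Rot A B))
    (F : Set (Matching I)) : Set (Rot A B) :=
  {r | r ∈ RotSet I ∧ ∀ M ∈ F, r ∈ RM M}

/-- The trivial meta-rotation `θ_z^F` of rotations eliminated in no matching of `F`. -/
def thetaZ (I : SchoolInstance A B) (RM : Matching I → Set (Rot A B))
    (F : Set (Matching I)) : Set (Rot A B) :=
  {r | r ∈ RotSet I ∧ ∀ M ∈ F, r ∉ RM M}

/-- `θ` is a meta-rotation of `F` (an equivalence class of `~`). -/
def IsMetaRot (I : SchoolInstance A B) (RM : Matching I → Set (Rot A B))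
    (F : Set (Matching I)) (θ : Set (Rot A B)) : Prop :=
  ∃ r ∈ RotSet I, θ = {r' | r' ∈ RotSet I ∧ rotEquiv I RM F r r'}

/-- `θ` is a proper meta-rotation of `F`. -/
def IsProperMeta (I : SchoolInstance A B) (RM : Matching I → Set (Rot A B))
    (F : Set (Matching I)) (θ : Set (Rot A B)) : Prop :=
  IsMetaRot I RM F θ ∧ θ ≠ theta0 I RM F ∧ θ ≠ thetaZ I RM F

/-- `θ ⊵^F θ'` on (proper) meta-rotations. -/
def metaDom (I : SchoolInstance A B) (RM : Matching I → Set (Rot A B))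
    (F : Set (Matching I)) (θ θ' : Set (Rot A B)) : Prop :=
  ∀ M ∈ F, θ' ⊆ RM M → θ ⊆ RM M

/-- `Θ_M`: the set of proper meta-rotations contained in `R_M`. -/
def ThetaM (I : SchoolInstance A B) (RM : Matching I → Set (Rot A B))
    (F : Set (Matching I)) (M : Matching I) : Set (Set (Rot A B)) :=
  {θ | IsProperMeta I RM F θ ∧ θ ⊆ RM M}

/-- `Θ` is an upper-closed set of proper meta-rotations. -/
def UCProper (I : SchoolInstance A B) (RM : Matching I → Set (Rot A B))
    (F : Set (Matching I)) (Θ : Set (Set (Rot A B))) : Prop :=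
  (∀ θ ∈ Θ, IsProperMeta I RM F θ) ∧
    ∀ θ' ∈ Θ, ∀ θ, IsProperMeta I RM F θ → metaDom I RM F θ θ' → θ ∈ Θ

/-- `M_R`: the stable matching whose rotation set is `R` (via definite description). -/
def MofR (I : SchoolInstance A B) (RM : Matching I → Set (Rot A B))
    (R : Set (Rot A B)) : Matching I :=
  Classical.epsilon fun M => Stable I M ∧ RM M = R

/-- `R^θ = θ₀^F ∪ ⋃ {θ' proper : θ' ⊵^F θ}`. -/
def Rup (I : SchoolInstance A B) (RM : Matching I → Set (Rot A B))
    (F : Set (Matching I)) (θ : Set (Rot A B)) : Set (Rot A B) :=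
  theta0 I RM F ∪ ⋃₀ {θ' | IsProperMeta I RM F θ' ∧ metaDom I RM F θ' θ}

/-- `R_θ = θ₀^F ∪ ⋃ {θ' proper : θ' ▷^F θ}`. -/
def Rdn (I : SchoolInstance A B) (RM : Matching I → Set (Rot A B))
    (F : Set (Matching I)) (θ : Set (Rot A B)) : Set (Rot A B) :=
  theta0 I RM F ∪ ⋃₀ {θ' | IsProperMeta I RM F θ' ∧ metaDom I RM F θ' θ ∧ θ' ≠ θ}

/-- `M^θ`. -/
def Mup (I : SchoolInstance A B) (RM : Matching I → Set (Rot A B))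
    (F : Set (Matching I)) (θ : Set (Rot A B)) : Matching I :=
  MofR I RM (Rup I RM F θ)

/-- `M_θ`. -/
def Mdn (I : SchoolInstance A B) (RM : Matching I → Set (Rot A B))
    (F : Set (Matching I)) (θ : Set (Rot A B)) : Matching I :=
  MofR I RM (Rdn I RM F θ)

/-- The meet `M ∧ M'` in the lattice of stable matchings (via definite description). -/
def meetM (I : SchoolInstance A B) (M M' : Matching I) : Matching I :=
  Classical.epsilon fun N => IsMeet I M M' N

/-- First order differential `∂f_θ = f(M^θ) − f(M_θ)`. -/
def d1 (I : SchoolInstance A B) (RM : Matching I → Set (Rot A B))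
    (F : Set (Matching I)) (f : Matching I → ℝ) (θ : Set (Rot A B)) : ℝ :=
  f (Mup I RM F θ) - f (Mdn I RM F θ)

/-- Second order differential
`∂²f_{θ,θ'} = f(M^θ ∧ M_{θ'}) + f(M_θ ∧ M^{θ'}) − f(M_θ ∧ M_{θ'}) − f(M^θ ∧ M^{θ'})`. -/
def d2 (I : SchoolInstance A B) (RM : Matching I → Set (Rot A B))
    (F : Set (Matching I)) (f : Matching I → ℝ) (θ θ' : Set (Rot A B)) : ℝ :=
  f (meetM I (Mup I RM F θ) (Mdn I RM F θ')) + f (meetM I (Mdn I RM F θ) (Mup I RM F θ'))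
    - f (meetM I (Mdn I RM F θ) (Mdn I RM F θ')) - f (meetM I (Mup I RM F θ) (Mup I RM F θ'))

/-- The greatest element `M₀^F` of `F` (via definite description). -/
def topF (I : SchoolInstance A B) (F : Set (Matching I)) : Matching I :=
  Classical.epsilon fun N => N ∈ F ∧ ∀ P ∈ F, matGE I N P

/-- Vertices of the digraph: all rotations, plus a source `s` and sink `t`. -/
abbrev Vtx (A B : Type) : Type := Rot A B ⊕ Bool

/-- The source `s`. -/
def srcV : Vtx A B := Sum.inr true

/-- The sink `t`. -/
def tgtV : Vtx A B := Sum.inr false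

/-- The value of the cut `S` for the capacity function `u`: the total capacity
of the arcs leaving `S`. -/
def cutVal (u : Vtx A B → Vtx A B → ℝ≥0∞) (S : Set (Vtx A B)) : ℝ≥0∞ :=
  ∑ p : Vtx A B × Vtx A B, if p.1 ∈ S ∧ p.2 ∉ S then u p.1 p.2 else 0

/-- The `s`-`t` cut `{s} ∪ R`. -/
def cutOf (R : Set (Rot A B)) : Set (Vtx A B) := insert srcV (Sum.inl '' R)

/-- `(u, C)` witnesses minimum cut representability of `Π(f, F)`: for every
`R ⊆ R(I)`, the cut `{s} ∪ R` has finite capacity iff `R` is upper-closed and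
`M_R ∈ F`, and in that case its value is `f(M_R) + C`. -/
def MinCutRepWith (I : SchoolInstance A B) (RM : Matching I → Set (Rot A B))
    (F : Set (Matching I)) (f : Matching I → ℝ)
    (u : Vtx A B → Vtx A B → ℝ≥0∞) (C : ℝ) : Prop :=
  ∀ R : Set (Rot A B), R ⊆ RotSet I →
    ((cutVal u (cutOf R) ≠ ⊤ ↔
        (UpperClosed I RM R ∧ ∃ M, Stable I M ∧ RM M = R ∧ M ∈ F)) ∧
      (∀ M, Stable I M → RM M = R → M ∈ F → (cutVal u (cutOf R)).toReal = f M + C))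

/-- The problem `Π(f, F)` is minimum cut representable. -/
def MinCutRep (I : SchoolInstance A B) (RM : Matching I → Set (Rot A B))
    (F : Set (Matching I)) (f : Matching I → ℝ) : Prop :=
  ∃ u C, MinCutRepWith I RM F f u C

/-- The cut digraph `D^{f,F}` (with representative rotations `rep` and
constant `γ`); capacities of parallel arcs are added. -/
def cutDigraph (I : SchoolInstance A B) (RM : Matching I → Set (Rot A B))
    (F : Set (Matching I)) (f : Matching I → ℝ)
    (rep : Set (Rot A B) → Rot A B) (γ : ℝ) : Vtx A B → Vtx A B → ℝ≥0∞ :=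
  fun x y =>
    (if ∃ θ, IsMetaRot I RM F θ ∧ ∃ r ∈ θ, ∃ r' ∈ θ, r ≠ r' ∧ x = Sum.inl r ∧ y = Sum.inl r'
      then ⊤ else 0)
    + (if ∃ θ θ', IsProperMeta I RM F θ ∧ IsProperMeta I RM F θ' ∧ θ ≠ θ' ∧
          metaDom I RM F θ' θ ∧ x = Sum.inl (rep θ) ∧ y = Sum.inl (rep θ')
        then ⊤ else 0)
    + (∑ θ : Set (Rot A B), ∑ θ' : Set (Rot A B),
        if IsProperMeta I RM F θ ∧ IsProperMeta I RM F θ' ∧ θ ≠ θ' ∧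
            x = Sum.inl (rep θ) ∧ y = Sum.inl (rep θ')
        then ENNReal.ofReal ((1 / 2) * d2 I RM F f θ θ') else 0)
    + (if (theta0 I RM F).Nonempty ∧ x = srcV ∧ y = Sum.inl (rep (theta0 I RM F))
        then ⊤ else 0)
    + (if (thetaZ I RM F).Nonempty ∧ x = Sum.inl (rep (thetaZ I RM F)) ∧ y = tgtV
        then ⊤ else 0)
    + (∑ θ : Set (Rot A B),
        if IsProperMeta I RM F θ ∧ x = Sum.inl (rep θ) ∧ y = tgtV
        then ENNReal.ofReal (d1 I RM F f θ -
          (1 / 2) * (∑ θ' : Set (Rot A B),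
            if IsProperMeta I RM F θ' ∧ θ' ≠ θ then d2 I RM F f θ θ' else 0) + γ)
        else 0)
    + (∑ θ : Set (Rot A B),
        if IsProperMeta I RM F θ ∧ x = srcV ∧ y = Sum.inl (rep θ)
        then ENNReal.ofReal γ else 0)

/-- `b` prefers `S'` to `S''`: every member of `S'` is preferred to every
member of `S'' ∖ S'`. -/
def prefersSet (I : SchoolInstance A B) (b : B) (S' S'' : Set (Option A)) : Prop :=
  ∀ x ∈ S', ∀ y ∈ S'', y ∉ S' → I.prefB b x y

/-- `A(ρ)`: students appearing in `ρ₊`. -/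
def Aof (r : Rot A B) : Set A := {a | ∃ b : B, (some a, some b) ∈ r.1}

/-- `B(ρ)`: schools appearing in `ρ₊`. -/
def Bof (r : Rot A B) : Set B := {b | ∃ a : A, (some a, some b) ∈ r.1}

/-- `ρ₊(b)`: students matched to `b` in `ρ₊`. -/
def rhoPlusB (r : Rot A B) (b : B) : Set A := {a | (some a, some b) ∈ r.1}

/-- `R^ρ = {ρ' : ρ' ⊵ ρ}`. -/
def RupRot (I : SchoolInstance A B) (RM : Matching I → Set (Rot A B))
    (r : Rot A B) : Set (Rot A B) :=
  {r' | r' ∈ RotSet I ∧ domRel I RM r' r}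

/-- `R_ρ = {ρ' : ρ' ▷ ρ}`. -/
def RdnRot (I : SchoolInstance A B) (RM : Matching I → Set (Rot A B))
    (r : Rot A B) : Set (Rot A B) :=
  {r' | r' ∈ RotSet I ∧ strictDom I RM r' r}

/-- `M^ρ`. -/
def MupRot (I : SchoolInstance A B) (RM : Matching I → Set (Rot A B))
    (r : Rot A B) : Matching I :=
  MofR I RM (RupRot I RM r)

/-- `M_ρ`. -/
def MdnRot (I : SchoolInstance A B) (RM : Matching I → Set (Rot A B))
    (r : Rot A B) : Matching I :=
  MofR I RM (RdnRot I RM r)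

/-- First order differential of `f` at a rotation: `∂f_ρ = f(M^ρ) − f(M_ρ)`. -/
def d1Rot (I : SchoolInstance A B) (RM : Matching I → Set (Rot A B))
    (f : Matching I → ℝ) (r : Rot A B) : ℝ :=
  f (MupRot I RM r) - f (MdnRot I RM r)

/-- Second order differential of `f` at a pair of distinct rotations. -/
def d2Rot (I : SchoolInstance A B) (RM : Matching I → Set (Rot A B))
    (f : Matching I → ℝ) (r r' : Rot A B) : ℝ :=
  f (meetM I (MupRot I RM r) (MdnRot I RM r')) + f (meetM I (MdnRot I RM r) (MupRot I RM r'))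
    - f (meetM I (MdnRot I RM r) (MdnRot I RM r'))
    - f (meetM I (MupRot I RM r) (MupRot I RM r'))

/-- The pair `(ρ_in, ρ_out)` characterizes the stable matchings assigning both
siblings `a, ā` to school `b`. -/
def siblingChar (I : SchoolInstance A B) (RM : Matching I → Set (Rot A B))
    (a abar : A) (b : B) (p : Rot A B × Rot A B) : Prop :=
  ∀ M : Matching I, Stable I M →
    ((M.toFun a = some b ∧ M.toFun abar = some b) ↔ (p.1 ∈ RM M ∧ p.2 ∉ RM M))

/-- Some stable matching assigns both `a` and `ā` to `b`. -/
def goodSchool (I : SchoolInstance A B) (a abar : A) (b : B) : Prop :=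
  ∃ M, Stable I M ∧ M.toFun a = some b ∧ M.toFun abar = some b

/-- The pair `(ρ_in(a,ā,b), ρ_out(a,ā,b))` (via definite description). -/
def siblingPair (I : SchoolInstance A B) (RM : Matching I → Set (Rot A B))
    (a abar : A) (b : B) : Rot A B × Rot A B :=
  Classical.epsilon fun p => p.1 ∈ RotSet I ∧ p.2 ∈ RotSet I ∧
    siblingChar I RM a abar b p ∧ strictDom I RM p.1 p.2

/-- `R_in(a, ā)`. -/
def Rin (I : SchoolInstance A B) (RM : Matching I → Set (Rot A B))
    (a abar : A) : Set (Rot A B) :=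
  {r | ∃ b, goodSchool I a abar b ∧ r = (siblingPair I RM a abar b).1}

/-- `R_out(a, ā)`. -/
def Rout (I : SchoolInstance A B) (RM : Matching I → Set (Rot A B))
    (a abar : A) : Set (Rot A B) :=
  {r | ∃ b, goodSchool I a abar b ∧ r = (siblingPair I RM a abar b).2}

/-- The indicator function: `0` when the siblings are matched to the same
school, `1` otherwise. -/
def sibIndicator (I : SchoolInstance A B) (a abar : A) : Matching I → ℝ :=
  fun M => if M.toFun a = M.toFun abar then 0 else 1

end SM

/-!
Ordering each student's options by preference, the stable matchings are closed under the
pointwise maximum and minimum. Quotas survive because every school receives exactly as many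
students who prefer the new matching as it loses students who prefer the new matching (the
pointwise inequality is forced by stability, and summing over schools makes it an equality);
a blocking pair of the pointwise minimum would force a preference cycle at the school.

A rotation `ρ(X, Y)` records, for each student moved by the cover, its partners in `X` and in
`Y`. If `ρ` were eliminated in `M ∧ N` but in neither `M` nor `N`, it would label a cover
`U ⋗ U'` below `M` and another below `N`; the moved students have the same partners in both, so
in `M ∧ N` they are at least as well off as in `U`, contradicting `M ∧ N ≤ U' < U`. This gives
`R_{M ∧ N} = R_M ∪ R_N`, dually `R_{M ∨ N} = R_M ∩ R_N`, and with `R_X ⊊ R_Y` for `Y < X`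
injectivity. Since matchings exposing `ρ` are closed under joins, there is a greatest one `W`,
and its predecessor across `ρ` has rotation set `{ρ' | ρ' ⊵ ρ}`; an upper-closed set is the
union of these sets over its elements, hence the rotation set of their meet.
-/

set_option autoImplicit false

open Finset

namespace SM

variable {A B : Type} [Fintype A] [Fintype B]

/-- Student `a`'s options, ordered so that more preferred options are larger. -/
def Pref (_ : SchoolInstance A B) (_ : A) : Type := Option B

instance (I : SchoolInstance A B) (a : A) : IsStrictTotalOrder (Option B) (I.prefA a) :=
  I.prefA_sto a

instance (I : SchoolInstance A B) (a : A) : LinearOrder (Pref I a) :=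
  @linearOrderOfSTO (Option B) (Function.swap (I.prefA a)) inferInstance _

instance (I : SchoolInstance A B) (b : B) : IsStrictTotalOrder (Option A) (I.prefB b) :=
  I.prefB_sto b

variable {I : SchoolInstance A B}

def Matching.pref (M : Matching I) (a : A) : Pref I a := M.toFun a

lemma Matching.toFun_injective :
    Function.Injective (Matching.toFun : Matching I → A → Option B) := by
  rintro ⟨f, _⟩ ⟨g, _⟩ rfl
  rfl

instance : PartialOrder (Matching I) :=
  PartialOrder.lift (fun M a => M.pref a) Matching.toFun_injective

instance : Finite (Matching I) := Finite.of_injective _ Matching.toFun_injective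

lemma Matching.le_def {M N : Matching I} : M ≤ N ↔ ∀ a, M.pref a ≤ N.pref a := Iff.rfl

lemma matGE_iff_le {M N : Matching I} : matGE I M N ↔ N ≤ M := by
  simp only [matGE, Matching.le_def]
  exact forall_congr' fun a => or_congr_left eq_comm

lemma matLT_iff_lt {M N : Matching I} : matLT I M N ↔ M < N := by
  rw [matLT, matGE_iff_le, lt_iff_le_and_ne, Matching.toFun_injective.ne_iff]

lemma Matching.ext_pref {M N : Matching I} (h : ∀ a, M.pref a = N.pref a) : M = N :=
  Matching.toFun_injective (funext h)

def supFun (M N : Matching I) (a : A) : Option B :=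
  if N.pref a ≤ M.pref a then M.toFun a else N.toFun a

def infFun (M N : Matching I) (a : A) : Option B :=
  if M.pref a ≤ N.pref a then M.toFun a else N.toFun a

lemma supFun_eq_or_eq (M N : Matching I) (a : A) :
    supFun M N a = M.toFun a ∨ supFun M N a = N.toFun a := by
  unfold supFun; split_ifs <;> simp

lemma infFun_eq_or_eq (M N : Matching I) (a : A) :
    infFun M N a = M.toFun a ∨ infFun M N a = N.toFun a := by
  unfold infFun; split_ifs <;> simp

section Counting

variable [DecidableEq B] {M N : Matching I} {a : A} {b : B} {x : Option A}

lemma mem_assignedTo : a ∈ assignedTo I M b ↔ M.toFun a = some b := by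
  simp [assignedTo]

lemma card_assignedTo_le (M : Matching I) (b : B) : #(assignedTo I M b) ≤ I.q b := by
  unfold assignedTo
  convert M.quota b

lemma Stable.pref_le_of_toFun_eq_none (hM : Stable I M) (h : N.toFun a = none) :
    N.pref a ≤ M.pref a :=
  not_lt.1 fun hlt => hM.2.1 ⟨a, by rw [BlocksStudent, ← h]; exact hlt⟩

lemma Stable.prefB_some_none (hM : Stable I M) (h : M.toFun a = some b) :
    I.prefB b (some a) none := by
  rcases trichotomous_of (I.prefB b) (some a) none with h' | h' | h'
  · exact h'
  · cases h'
  · exact absurd ⟨b, a, h, h'⟩ hM.2.2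

lemma Stable.prefB_of_inPartners (hM : Stable I M) (hab : I.prefA a (some b) (M.toFun a))
    (hx : inPartners I M b x) : I.prefB b x (some a) := by
  rcases trichotomous_of (I.prefB b) x (some a) with h | rfl | h
  · exact h
  · obtain ⟨_, ha', hM⟩ | ⟨h, -⟩ := hx
    · cases ha'; rw [hM] at hab; exact absurd hab (irrefl _)
    · cases h
  · exact absurd ⟨a, b, hab, x, hx, h⟩ hM.1

def gainers (I : SchoolInstance A B) (M N : Matching I) (b : B) : Finset A :=
  (assignedTo I M b).filter fun a => N.pref a < M.pref a

def losers (I : SchoolInstance A B) (M N : Matching I) (b : B) : Finset A :=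
  (assignedTo I M b).filter fun a => M.pref a < N.pref a

lemma mem_gainers : a ∈ gainers I M N b ↔ M.toFun a = some b ∧ N.pref a < M.pref a := by
  simp [gainers, mem_assignedTo]

lemma mem_losers : a ∈ losers I M N b ↔ M.toFun a = some b ∧ M.pref a < N.pref a := by
  simp [losers, mem_assignedTo]

lemma losers_subset : losers I M N b ⊆ assignedTo I M b := filter_subset _ _

lemma Stable.prefB_of_mem_gainers (hM : Stable I M) (ha : a ∈ gainers I N M b) {x : A}
    (hx : x ∈ assignedTo I M b) : I.prefB b (some x) (some a) := by
  obtain ⟨haN, hlt⟩ := mem_gainers.1 ha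
  exact hM.prefB_of_inPartners (haN ▸ hlt) (Or.inl ⟨x, rfl, mem_assignedTo.1 hx⟩)

lemma Stable.card_assignedTo_of_mem_gainers (hM : Stable I M) (hN : Stable I N)
    (ha : a ∈ gainers I N M b) : #(assignedTo I M b) = I.q b := by
  obtain ⟨haN, hlt⟩ := mem_gainers.1 ha
  refine le_antisymm (card_assignedTo_le M b) (not_lt.1 fun hs => ?_)
  exact asymm (hM.prefB_of_inPartners (haN ▸ hlt) (Or.inr ⟨rfl, hs⟩)) (hN.prefB_some_none haN)

lemma gainers_eq_empty_of_mem_gainers (hM : Stable I M) (hN : Stable I N)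
    (ha : a ∈ gainers I N M b) : gainers I M N b = ∅ :=
  eq_empty_of_forall_notMem fun _ ha' =>
    asymm (hM.prefB_of_mem_gainers ha (filter_subset _ _ ha'))
      (hN.prefB_of_mem_gainers ha' (filter_subset _ _ ha))

lemma card_gainers_le_card_losers (hM : Stable I M) (hN : Stable I N) (b : B) :
    #(gainers I N M b) ≤ #(losers I M N b) := by
  obtain hempty | ⟨a, ha⟩ := (gainers I N M b).eq_empty_or_nonempty
  · simp [hempty]
  -- `b` is full under `M`, and those of its `M`-students who do not prefer `N` keep `b` under `N`.
  have hMN := gainers_eq_empty_of_mem_gainers hM hN ha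
  have hsub : assignedTo I M b \ losers I M N b ∪ gainers I N M b ⊆ assignedTo I N b := by
    intro x hx
    rcases mem_union.1 hx with hx | hx
    · obtain ⟨hxM, hxl⟩ := mem_sdiff.1 hx
      have hxg : x ∉ gainers I M N b := hMN ▸ notMem_empty x
      have hx' := mem_assignedTo.1 hxM
      have heq : N.pref x = M.pref x :=
        le_antisymm (not_lt.1 fun h => hxl (mem_losers.2 ⟨hx', h⟩))
          (not_lt.1 fun h => hxg (mem_gainers.2 ⟨hx', h⟩))
      exact mem_assignedTo.2 (heq.trans hx')
    · exact filter_subset _ _ hx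
  have hdisj : Disjoint (assignedTo I M b \ losers I M N b) (gainers I N M b) := by
    refine disjoint_left.2 fun x hx hxg => ?_
    obtain ⟨hxN, hlt⟩ := mem_gainers.1 hxg
    have hxM := mem_assignedTo.1 (mem_sdiff.1 hx).1
    exact hlt.ne (hxM.trans hxN.symm)
  have hcard := card_le_card hsub
  rw [card_union_of_disjoint hdisj, card_sdiff_of_subset losers_subset] at hcard
  have := hM.card_assignedTo_of_mem_gainers hN ha
  have := card_assignedTo_le N b
  have : #(losers I M N b) ≤ #(assignedTo I M b) := card_le_card losers_subset
  omega

lemma sum_card_gainers (hM : Stable I M) :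
    ∑ b, #(gainers I N M b) = #{a | M.pref a < N.pref a} := by
  rw [card_eq_sum_card_fiberwise (f := N.toFun) (t := univ) fun _ _ => mem_coe.2 (mem_univ _),
    Fintype.sum_option, card_eq_zero.2, zero_add]
  · refine sum_congr rfl fun b _ => congrArg card (ext fun a => ?_)
    simp [mem_gainers, and_comm]
  · exact filter_eq_empty_iff.2 fun a ha hN =>
      (not_lt.2 (hM.pref_le_of_toFun_eq_none hN)) (mem_filter.1 ha).2

lemma sum_card_losers_le :
    ∑ b, #(losers I M N b) ≤ #{a | M.pref a < N.pref a} := by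
  rw [card_eq_sum_card_fiberwise (f := M.toFun) (t := univ) fun _ _ => mem_coe.2 (mem_univ _),
    Fintype.sum_option]
  refine le_add_left (sum_le_sum fun b _ => card_le_card fun a ha => ?_)
  simp_all [mem_losers]

lemma card_gainers_eq_card_losers (hM : Stable I M) (hN : Stable I N) (b : B) :
    #(gainers I N M b) = #(losers I M N b) := by
  -- Summed over the schools, the left sides count the students who prefer `N` to `M`, and the
  -- right sides at most those.
  have hle : ∀ b ∈ univ, #(gainers I N M b) ≤ #(losers I M N b) :=
    fun b _ => card_gainers_le_card_losers hM hN b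
  have hsum : ∑ b, #(gainers I N M b) = ∑ b, #(losers I M N b) :=
    le_antisymm (sum_le_sum hle) (sum_card_gainers hM ▸ sum_card_losers_le)
  exact (sum_eq_sum_iff_of_le hle).1 hsum b (mem_univ b)

end Counting

section Lattice

variable [DecidableEq B] {M N J : Matching I} {a : A} {b : B} {x : Option A}

lemma Stable.not_prefB_of_inPartners (hM : Stable I M) (hab : I.prefA a (some b) (M.toFun a))
    (hx : inPartners I M b x) : ¬ I.prefB b (some a) x :=
  fun h => hM.1 ⟨a, b, hab, x, hx, h⟩

lemma Stable.of_forall_eq_or_eq (hM : Stable I M) (hN : Stable I N)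
    (hJ : ∀ a, J.toFun a = M.toFun a ∨ J.toFun a = N.toFun a)
    (hpair : ¬ ∃ a b, BlocksPair I J a b) : Stable I J := by
  refine ⟨hpair, fun ⟨a, ha⟩ => ?_, fun ⟨b, a, hab, hpref⟩ => ?_⟩
  · rcases hJ a with h | h
    · exact hM.2.1 ⟨a, show I.prefA a none _ from h ▸ ha⟩
    · exact hN.2.1 ⟨a, show I.prefA a none _ from h ▸ ha⟩
  · rcases hJ a with h | h
    · exact hM.2.2 ⟨b, a, h ▸ hab, hpref⟩
    · exact hN.2.2 ⟨b, a, h ▸ hab, hpref⟩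

lemma card_filter_le_add_card_losers (M N : Matching I) (b : B) :
    #{a ∈ assignedTo I M b | N.pref a ≤ M.pref a} + #(losers I M N b) =
      #(assignedTo I M b) := by
  simpa only [not_le, losers] using card_filter_add_card_filter_not (s := assignedTo I M b)
    (fun a => N.pref a ≤ M.pref a)

lemma card_filter_le_add_card_gainers (M N : Matching I) (b : B) :
    #{a ∈ assignedTo I M b | M.pref a ≤ N.pref a} + #(gainers I M N b) =
      #(assignedTo I M b) := by
  simpa only [not_le, gainers] using card_filter_add_card_filter_not (s := assignedTo I M b)
    (fun a => M.pref a ≤ N.pref a)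

lemma filter_supFun_eq (M N : Matching I) (b : B) :
    ({a | supFun M N a = some b} : Finset A) =
      {a ∈ assignedTo I M b | N.pref a ≤ M.pref a} ∪ gainers I N M b := by
  ext a
  rw [mem_filter]
  by_cases h : N.pref a ≤ M.pref a
  · simp [supFun, mem_gainers, mem_assignedTo, h, not_lt.2 h]
  · simp [supFun, mem_gainers, mem_assignedTo, h, not_le.1 h]

lemma filter_infFun_eq (M N : Matching I) (b : B) :
    ({a | infFun M N a = some b} : Finset A) =
      {a ∈ assignedTo I M b | M.pref a ≤ N.pref a} ∪ losers I N M b := by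
  ext a
  rw [mem_filter]
  by_cases h : M.pref a ≤ N.pref a
  · simp [infFun, mem_losers, mem_assignedTo, h, not_lt.2 h]
  · simp [infFun, mem_losers, mem_assignedTo, h, not_le.1 h]

lemma card_filter_supFun (hM : Stable I M) (hN : Stable I N) (b : B) :
    #{a | supFun M N a = some b} = #(assignedTo I M b) := by
  rw [filter_supFun_eq, card_union_of_disjoint, card_gainers_eq_card_losers hM hN,
    card_filter_le_add_card_losers]
  refine disjoint_left.2 fun a ha ha' => ?_
  exact not_lt.2 (mem_filter.1 ha).2 (mem_gainers.1 ha').2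

lemma card_filter_infFun (hM : Stable I M) (hN : Stable I N) (b : B) :
    #{a | infFun M N a = some b} = #(assignedTo I M b) := by
  rw [filter_infFun_eq, card_union_of_disjoint, ← card_gainers_eq_card_losers hN hM,
    card_filter_le_add_card_gainers]
  refine disjoint_left.2 fun a ha ha' => ?_
  exact not_lt.2 (mem_filter.1 ha).2 (mem_losers.1 ha').2

def stableSup (hM : Stable I M) (hN : Stable I N) : Matching I :=
  ⟨supFun M N, fun b => by
    convert (card_filter_supFun hM hN b).trans_le (card_assignedTo_le M b)⟩

def stableInf (hM : Stable I M) (hN : Stable I N) : Matching I :=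
  ⟨infFun M N, fun b => by
    convert (card_filter_infFun hM hN b).trans_le (card_assignedTo_le M b)⟩

lemma stableSup_pref (hM : Stable I M) (hN : Stable I N) (a : A) :
    (stableSup hM hN).pref a = max (M.pref a) (N.pref a) := by
  by_cases h : N.pref a ≤ M.pref a
  · exact (if_pos h).trans (max_eq_left h).symm
  · exact (if_neg h).trans (max_eq_right (not_le.1 h).le).symm

lemma stableInf_pref (hM : Stable I M) (hN : Stable I N) (a : A) :
    (stableInf hM hN).pref a = min (M.pref a) (N.pref a) := by
  by_cases h : M.pref a ≤ N.pref a
  · exact (if_pos h).trans (min_eq_left h).symm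
  · exact (if_neg h).trans (min_eq_right (not_le.1 h).le).symm

lemma le_stableSup_left (hM : Stable I M) (hN : Stable I N) : M ≤ stableSup hM hN :=
  fun a => (le_max_left _ _).trans_eq (stableSup_pref hM hN a).symm

lemma le_stableSup_right (hM : Stable I M) (hN : Stable I N) : N ≤ stableSup hM hN :=
  fun a => (le_max_right _ _).trans_eq (stableSup_pref hM hN a).symm

lemma stableSup_le (hM : Stable I M) (hN : Stable I N) (hMJ : M ≤ J) (hNJ : N ≤ J) :
    stableSup hM hN ≤ J :=
  fun a => (stableSup_pref hM hN a).trans_le (max_le (hMJ a) (hNJ a))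

lemma stableInf_le_left (hM : Stable I M) (hN : Stable I N) : stableInf hM hN ≤ M :=
  fun a => (stableInf_pref hM hN a).trans_le (min_le_left _ _)

lemma stableInf_le_right (hM : Stable I M) (hN : Stable I N) : stableInf hM hN ≤ N :=
  fun a => (stableInf_pref hM hN a).trans_le (min_le_right _ _)

lemma le_stableInf (hM : Stable I M) (hN : Stable I N) (hJM : J ≤ M) (hJN : J ≤ N) :
    J ≤ stableInf hM hN :=
  fun a => (le_min (hJM a) (hJN a)).trans_eq (stableInf_pref hM hN a).symm

lemma stableInf_comm (hM : Stable I M) (hN : Stable I N) : stableInf hM hN = stableInf hN hM :=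
  Matching.ext_pref fun a => by rw [stableInf_pref, stableInf_pref]; exact min_comm _ _

lemma stableSup_stable (hM : Stable I M) (hN : Stable I N) : Stable I (stableSup hM hN) := by
  refine hM.of_forall_eq_or_eq hN (supFun_eq_or_eq M N) fun ⟨a, b, hab, x, hx, hxa⟩ => ?_
  have hlt : ∀ P, P ≤ stableSup hM hN → I.prefA a (some b) (P.toFun a) :=
    fun P hP => lt_of_le_of_lt (hP a) hab
  rcases hx with ⟨a', rfl, ha'⟩ | ⟨rfl, hs⟩
  · rcases supFun_eq_or_eq M N a' with h | h
    · exact hM.not_prefB_of_inPartners (hlt M (le_stableSup_left hM hN))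
        (Or.inl ⟨a', rfl, h ▸ ha'⟩) hxa
    · exact hN.not_prefB_of_inPartners (hlt N (le_stableSup_right hM hN))
        (Or.inl ⟨a', rfl, h ▸ ha'⟩) hxa
  · exact hM.not_prefB_of_inPartners (hlt M (le_stableSup_left hM hN))
      (Or.inr ⟨rfl, (card_filter_supFun hM hN b).symm.trans_lt hs⟩) hxa

lemma stableInf_not_prefB (hM : Stable I M) (hN : Stable I N)
    (hab : I.prefA a (some b) (M.toFun a)) (hx : inPartners I (stableInf hM hN) b x) :
    ¬ I.prefB b (some a) x := by
  intro hxa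
  rcases hx with ⟨a₀, rfl, ha₀⟩ | ⟨rfl, hs⟩
  swap
  · exact hM.not_prefB_of_inPartners hab
      (Or.inr ⟨rfl, (card_filter_infFun hM hN b).symm.trans_lt hs⟩) hxa
  by_cases hM₀ : M.toFun a₀ = some b
  · exact hM.not_prefB_of_inPartners hab (Or.inl ⟨a₀, rfl, hM₀⟩) hxa
  have hN₀ : N.toFun a₀ = some b :=
    ((infFun_eq_or_eq M N a₀).resolve_left fun h => hM₀ (h ▸ ha₀)) ▸ ha₀
  have hK : (stableInf hM hN).pref a₀ = N.pref a₀ := ha₀.trans hN₀.symm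
  have hlt : N.pref a₀ < M.pref a₀ :=
    lt_of_le_of_ne (hK ▸ stableInf_le_left hM hN a₀) fun h => hM₀ (h.symm.trans hN₀)
  -- `a₀` sits at `b` under `N` but prefers `M`; the counting lemma balances it by a student `w`
  -- at `b` under `M` who prefers `M`, and stability of `N` and `M` give `a₀ ≻_b w ≻_b a`.
  obtain ⟨w, hw⟩ : (gainers I M N b).Nonempty := by
    rw [← card_pos, card_gainers_eq_card_losers hN hM]
    exact card_pos.2 ⟨a₀, mem_losers.2 ⟨hN₀, hlt⟩⟩
  exact irrefl _ <| _root_.trans hxa <| _root_.trans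
    (hN.prefB_of_mem_gainers hw (mem_assignedTo.2 hN₀))
    (hM.prefB_of_inPartners hab (Or.inl ⟨w, rfl, (mem_gainers.1 hw).1⟩))

lemma stableInf_stable (hM : Stable I M) (hN : Stable I N) : Stable I (stableInf hM hN) := by
  refine hM.of_forall_eq_or_eq hN (infFun_eq_or_eq M N) fun ⟨a, b, hab, x, hx, hxa⟩ => ?_
  rcases infFun_eq_or_eq M N a with h | h
  · exact stableInf_not_prefB hM hN (h ▸ hab) hx hxa
  · rw [stableInf_comm] at hx
    exact stableInf_not_prefB hN hM (h ▸ hab) hx hxa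

lemma IsJoin.eq_stableSup (hJ : IsJoin I M N J) (hM : Stable I M) (hN : Stable I N) :
    J = stableSup hM hN := by
  simp only [IsJoin, matGE_iff_le] at hJ
  exact le_antisymm (hJ.2.2.2 _ (stableSup_stable hM hN) (le_stableSup_left hM hN)
    (le_stableSup_right hM hN)) (stableSup_le hM hN hJ.2.1 hJ.2.2.1)

lemma IsMeet.eq_stableInf (hJ : IsMeet I M N J) (hM : Stable I M) (hN : Stable I N) :
    J = stableInf hM hN := by
  simp only [IsMeet, matGE_iff_le] at hJ
  exact le_antisymm (le_stableInf hM hN hJ.2.1 hJ.2.2.1) (hJ.2.2.2 _ (stableInf_stable hM hN)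
    (stableInf_le_left hM hN) (stableInf_le_right hM hN))

end Lattice

section Chains

variable [DecidableEq B] {U X Y Z : Matching I} {c : List (Matching I)}

lemma immPred_iff : ImmPred I Y X ↔
    Stable I Y ∧ Stable I X ∧ Y < X ∧ ∀ P, Stable I P → Y < P → ¬ P < X := by
  simp only [ImmPred, matLT_iff_lt, not_exists, not_and]

lemma ImmPred.lt (h : ImmPred I Y X) : Y < X := (immPred_iff.1 h).2.2.1

lemma ImmPred.exists_toFun_ne (h : ImmPred I Y X) : ∃ a, X.toFun a ≠ Y.toFun a :=
  Function.ne_iff.1 (Matching.toFun_injective.ne h.lt.ne')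

lemma chainTo_iff : chainTo I X Y c ↔ c.head? = some X ∧ c.getLast? = some Y ∧
    (∀ N ∈ c, Stable I N) ∧ c.IsChain (fun X Y => ImmPred I Y X) := Iff.rfl

lemma not_chainTo_nil : ¬ chainTo I X Y [] := by simp [chainTo_iff]

lemma chainTo_singleton_iff : chainTo I X Y [Z] ↔ Z = X ∧ Z = Y ∧ Stable I Z := by
  simp [chainTo_iff]

lemma chainTo_cons_cons_iff {l : List (Matching I)} :
    chainTo I X Y (Z :: U :: l) ↔ Z = X ∧ ImmPred I U X ∧ chainTo I U Y (U :: l) := by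
  simp only [chainTo_iff, List.head?_cons, Option.some.injEq, List.getLast?_cons_cons,
    List.forall_mem_cons, List.isChain_cons_cons, true_and]
  constructor
  · rintro ⟨rfl, hlast, ⟨-, hU, hl⟩, himm, hc⟩
    exact ⟨rfl, himm, hlast, ⟨hU, hl⟩, hc⟩
  · rintro ⟨rfl, himm, hlast, ⟨hU, hl⟩, hc⟩
    exact ⟨rfl, hlast, ⟨himm.2.1, hU, hl⟩, himm, hc⟩

lemma chainTo.cons (himm : ImmPred I U X) (hc : chainTo I U Y c) : chainTo I X Y (X :: c) := by
  obtain _ | ⟨U', l⟩ := c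
  · exact absurd hc not_chainTo_nil
  obtain rfl : U' = U := by simpa using hc.1
  exact chainTo_cons_cons_iff.2 ⟨rfl, himm, hc⟩

lemma chainTo.le (hc : chainTo I X Y c) : Y ≤ X := by
  induction c generalizing X with
  | nil => exact absurd hc not_chainTo_nil
  | cons V l ih =>
    obtain _ | ⟨U, l⟩ := l
    · obtain ⟨rfl, rfl, -⟩ := chainTo_singleton_iff.1 hc
      exact le_rfl
    · obtain ⟨rfl, himm, hc⟩ := chainTo_cons_cons_iff.1 hc
      exact (ih hc).trans himm.lt.le

lemma exists_chainTo (hX : Stable I X) (hY : Stable I Y) (hYX : Y ≤ X) :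
    ∃ c, chainTo I X Y c := by
  induction X using WellFoundedLT.induction with
  | _ X ih =>
  obtain rfl | hlt := hYX.eq_or_lt
  · exact ⟨[Y], chainTo_singleton_iff.2 ⟨rfl, rfl, hY⟩⟩
  obtain ⟨U, ⟨hU, hYU, hUX⟩, hmax⟩ := Set.Finite.exists_maximal
    (s := {P | Stable I P ∧ Y ≤ P ∧ P < X}) (Set.toFinite _) ⟨Y, hY, le_rfl, hlt⟩
  have himm : ImmPred I U X := immPred_iff.2 ⟨hU, hX, hUX, fun P hP hUP hPX =>
    hUP.not_ge (hmax ⟨hP, hYU.trans hUP.le, hPX⟩ hUP.le)⟩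
  obtain ⟨c, hc⟩ := ih U hUX hU hYU
  exact ⟨X :: c, hc.cons himm⟩

end Chains

section Rotations

variable [DecidableEq A] [DecidableEq B] {M N U X Y Z : Matching I} {c : List (Matching I)}
  {a : A} {r : Rot A B}

lemma chainRots_singleton : chainRots I [X] = ∅ := by
  ext r
  simp only [chainRots, Set.mem_ofPred_eq, Set.mem_empty_iff_false, iff_false]
  rintro ⟨i, U, V, h1, h2, -⟩
  rcases i with _ | i <;> simp at h1 h2

lemma chainRots_cons_cons {l : List (Matching I)} :
    chainRots I (X :: Y :: l) = insert (rho I X Y) (chainRots I (Y :: l)) := by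
  ext r
  simp only [chainRots, Set.mem_ofPred_eq, Set.mem_insert_iff]
  constructor
  · rintro ⟨_ | i, U, V, h1, h2, rfl⟩
    · simp only [List.getElem?_cons_zero, Option.some.injEq, List.getElem?_cons_succ] at h1 h2
      exact Or.inl (h1 ▸ h2 ▸ rfl)
    · exact Or.inr ⟨i, U, V, by simpa using h1, by simpa using h2, rfl⟩
  · rintro (rfl | ⟨i, U, V, h1, h2, rfl⟩)
    · exact ⟨0, X, Y, rfl, rfl, rfl⟩
    · exact ⟨i + 1, U, V, by simpa using h1, by simpa using h2, rfl⟩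

lemma chainTo.append_singleton (hc : chainTo I X Y c) (himm : ImmPred I Z Y) :
    chainTo I X Z (c ++ [Z]) ∧ chainRots I (c ++ [Z]) = insert (rho I Y Z) (chainRots I c) := by
  induction c generalizing X with
  | nil => exact absurd hc not_chainTo_nil
  | cons V l ih =>
    obtain _ | ⟨U, l⟩ := l
    · obtain ⟨rfl, rfl, -⟩ := chainTo_singleton_iff.1 hc
      refine ⟨(chainTo_singleton_iff.2 ⟨rfl, rfl, himm.1⟩).cons himm, ?_⟩
      rw [List.singleton_append, chainRots_cons_cons, chainRots_singleton, chainRots_singleton]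
    · obtain ⟨rfl, himm', hc⟩ := chainTo_cons_cons_iff.1 hc
      obtain ⟨hc', hrots⟩ := ih hc
      refine ⟨hc'.cons himm', ?_⟩
      rw [List.cons_append, List.cons_append, chainRots_cons_cons, ← List.cons_append, hrots,
        chainRots_cons_cons, Set.insert_comm]

lemma chainTo.exists_immPred_of_mem (hc : chainTo I X Y c) {r : Rot A B}
    (hr : r ∈ chainRots I c) :
    ∃ U U', ImmPred I U' U ∧ r = rho I U U' ∧ U ≤ X ∧ Y ≤ U' := by
  induction c generalizing X with
  | nil => exact absurd hc not_chainTo_nil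
  | cons V l ih =>
    obtain _ | ⟨U, l⟩ := l
    · simp [chainRots_singleton] at hr
    · obtain ⟨rfl, himm, hc⟩ := chainTo_cons_cons_iff.1 hc
      rw [chainRots_cons_cons] at hr
      obtain rfl | hr := hr
      · exact ⟨V, U, himm, rfl, le_rfl, hc.le⟩
      · obtain ⟨W, W', hW, rfl, hWU, hYW'⟩ := ih hc hr
        exact ⟨W, W', hW, rfl, hWU.trans himm.lt.le, hYW'⟩

lemma mem_pairsOf_some {x : Option B} : (some a, x) ∈ pairsOf I M ↔ M.toFun a = x := by
  simp [pairsOf, eq_comm]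

lemma pref_eq_of_rho_eq (hρ : rho I X Y = rho I U N) (ha : X.toFun a ≠ Y.toFun a) :
    U.pref a = X.pref a ∧ N.pref a = Y.pref a := by
  have h1 : (some a, X.toFun a) ∈ (rho I U N).1 := by
    rw [← hρ]; simp [rho, mem_pairsOf_some, ha.symm]
  have h2 : (some a, Y.toFun a) ∈ (rho I U N).2 := by
    rw [← hρ]; simp [rho, mem_pairsOf_some, ha]
  simp only [rho, mem_sdiff, mem_pairsOf_some] at h1 h2
  exact ⟨h1.1, h2.1⟩

structure IsRotationMap (I : SchoolInstance A B) (M0 : Matching I)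
    (RM : Matching I → Set (Rot A B)) : Prop where
  stable_top : Stable I M0
  le_top : ∀ N, Stable I N → N ≤ M0
  eq_chainRots : ∀ M c, Stable I M → chainTo I M0 M c → RM M = chainRots I c

namespace IsRotationMap

variable {M0 : Matching I} {RM : Matching I → Set (Rot A B)}

lemma top_eq_empty (h : IsRotationMap I M0 RM) : RM M0 = ∅ := by
  rw [h.eq_chainRots M0 [M0] h.stable_top (chainTo_singleton_iff.2 ⟨rfl, rfl, h.stable_top⟩),
    chainRots_singleton]

lemma eq_insert_of_immPred (h : IsRotationMap I M0 RM) (himm : ImmPred I Y X) :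
    RM Y = insert (rho I X Y) (RM X) ∧ rho I X Y ∉ RM X := by
  have hX := himm.2.1
  obtain ⟨c, hc⟩ := exists_chainTo h.stable_top hX (h.le_top X hX)
  obtain ⟨hc', hrots⟩ := hc.append_singleton himm
  have hRX := h.eq_chainRots X c hX hc
  refine ⟨by rw [h.eq_chainRots Y _ himm.1 hc', hrots, hRX], fun hmem => ?_⟩
  -- Otherwise `ρ(X, Y)` labels a cover `U ⋗ U'` with `X ≤ U'`, which already moved `a` to `Y a`.
  obtain ⟨U, U', -, hρ, -, hXU'⟩ := hc.exists_immPred_of_mem (hRX ▸ hmem)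
  obtain ⟨a, ha⟩ := himm.exists_toFun_ne
  exact ha (show X.pref a = Y.pref a from
    le_antisymm ((hXU' a).trans_eq (pref_eq_of_rho_eq hρ ha).2) (himm.lt.le a))

lemma eq_union_chainRots (h : IsRotationMap I M0 RM) (hc : chainTo I X Y c) :
    RM Y = RM X ∪ chainRots I c := by
  induction c generalizing X with
  | nil => exact absurd hc not_chainTo_nil
  | cons V l ih =>
    obtain _ | ⟨U, l⟩ := l
    · obtain ⟨rfl, rfl, -⟩ := chainTo_singleton_iff.1 hc
      rw [chainRots_singleton, Set.union_empty]
    · obtain ⟨rfl, himm, hc⟩ := chainTo_cons_cons_iff.1 hc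
      rw [ih hc, (h.eq_insert_of_immPred himm).1, chainRots_cons_cons, Set.insert_union,
        Set.union_insert]

lemma mono (h : IsRotationMap I M0 RM) (hX : Stable I X) (hY : Stable I Y) (hYX : Y ≤ X) :
    RM X ⊆ RM Y := by
  obtain ⟨c, hc⟩ := exists_chainTo hX hY hYX
  exact (h.eq_union_chainRots hc).symm ▸ Set.subset_union_left

lemma ssubset_of_lt (h : IsRotationMap I M0 RM) (hX : Stable I X) (hY : Stable I Y)
    (hYX : Y < X) : RM X ⊂ RM Y := by
  obtain ⟨_ | ⟨V, _ | ⟨U, l⟩⟩, hc⟩ := exists_chainTo hX hY hYX.le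
  · exact absurd hc not_chainTo_nil
  · obtain ⟨rfl, rfl, -⟩ := chainTo_singleton_iff.1 hc
    exact absurd hYX (lt_irrefl _)
  · obtain ⟨rfl, himm, hc⟩ := chainTo_cons_cons_iff.1 hc
    obtain ⟨hU, hnot⟩ := h.eq_insert_of_immPred himm
    refine Set.ssubset_iff_subset_ne.2 ⟨h.mono hX hY hYX.le, fun heq => hnot ?_⟩
    exact heq ▸ h.mono himm.1 hY hc.le (hU ▸ Set.mem_insert _ _)

lemma exists_immPred_of_mem_diff (h : IsRotationMap I M0 RM) (hX : Stable I X)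
    (hY : Stable I Y) (hYX : Y ≤ X) (hrY : r ∈ RM Y) (hrX : r ∉ RM X) :
    ∃ U U', ImmPred I U' U ∧ r = rho I U U' ∧ U ≤ X ∧ Y ≤ U' := by
  obtain ⟨c, hc⟩ := exists_chainTo hX hY hYX
  rw [h.eq_union_chainRots hc] at hrY
  exact hc.exists_immPred_of_mem (hrY.resolve_left hrX)

lemma subset_rotSet (h : IsRotationMap I M0 RM) (hX : Stable I X) : RM X ⊆ RotSet I := by
  intro r hr
  obtain ⟨U, U', himm, hρ, -⟩ := h.exists_immPred_of_mem_diff h.stable_top hX (h.le_top X hX)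
    hr (h.top_eq_empty ▸ Set.notMem_empty r)
  exact ⟨U, U', himm, hρ⟩

theorem inf_eq (h : IsRotationMap I M0 RM) (hM : Stable I M) (hN : Stable I N) :
    RM (stableInf hM hN) = RM M ∪ RM N := by
  have hK := stableInf_stable hM hN
  refine Set.Subset.antisymm (fun r hr => ?_) (Set.union_subset
    (h.mono hM hK (stableInf_le_left hM hN)) (h.mono hN hK (stableInf_le_right hM hN)))
  by_contra hrMN
  rw [Set.mem_union, not_or] at hrMN
  obtain ⟨U, U', himm, rfl, hUM, hKU'⟩ :=
    h.exists_immPred_of_mem_diff hM hK (stableInf_le_left hM hN) hr hrMN.1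
  obtain ⟨V, V', -, hρ, hVN, -⟩ :=
    h.exists_immPred_of_mem_diff hN hK (stableInf_le_right hM hN) hr hrMN.2
  obtain ⟨a, ha⟩ := himm.exists_toFun_ne
  have hUK : U.pref a ≤ (stableInf hM hN).pref a := (stableInf_pref hM hN a).symm ▸
    le_min (hUM a) ((pref_eq_of_rho_eq hρ ha).1 ▸ hVN a)
  exact ha (show U.pref a = U'.pref a from
    le_antisymm (hUK.trans (hKU' a)) (himm.lt.le a))

theorem sup_eq (h : IsRotationMap I M0 RM) (hM : Stable I M) (hN : Stable I N) :
    RM (stableSup hM hN) = RM M ∩ RM N := by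
  have hJ := stableSup_stable hM hN
  refine Set.Subset.antisymm (Set.subset_inter
    (h.mono hJ hM (le_stableSup_left hM hN)) (h.mono hJ hN (le_stableSup_right hM hN)))
    fun r ⟨hrM, hrN⟩ => ?_
  by_contra hrJ
  obtain ⟨U, U', himm, rfl, hUJ, hMU'⟩ :=
    h.exists_immPred_of_mem_diff hJ hM (le_stableSup_left hM hN) hrM hrJ
  obtain ⟨V, V', -, hρ, -, hNV'⟩ :=
    h.exists_immPred_of_mem_diff hJ hN (le_stableSup_right hM hN) hrN hrJ
  obtain ⟨a, ha⟩ := himm.exists_toFun_ne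
  have hJU' : (stableSup hM hN).pref a ≤ U'.pref a := (stableSup_pref hM hN a).symm ▸
    max_le (hMU' a) ((pref_eq_of_rho_eq hρ ha).2 ▸ hNV' a)
  exact ha (show U.pref a = U'.pref a from
    le_antisymm ((hUJ a).trans hJU') (himm.lt.le a))

lemma injective (h : IsRotationMap I M0 RM) (hM : Stable I M) (hN : Stable I N)
    (heq : RM M = RM N) : M = N := by
  have hK := stableInf_stable hM hN
  have hRK : RM (stableInf hM hN) = RM M := by rw [h.inf_eq, heq, Set.union_self]
  have hKM := (stableInf_le_left hM hN).eq_or_lt.resolve_right fun hlt =>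
    (h.ssubset_of_lt hM hK hlt).ne hRK.symm
  have hKN := (stableInf_le_right hM hN).eq_or_lt.resolve_right fun hlt =>
    (h.ssubset_of_lt hN hK hlt).ne (hRK.trans heq).symm
  exact hKM.symm.trans hKN

lemma exists_exposed_of_mem (h : IsRotationMap I M0 RM) (hM : Stable I M) (hr : r ∈ RM M) :
    ∃ U, Stable I U ∧ Exposed I r U ∧ RM U ⊆ RM M := by
  obtain ⟨U, U', himm, rfl, -, hMU'⟩ := h.exists_immPred_of_mem_diff h.stable_top hM
    (h.le_top M hM) hr (h.top_eq_empty ▸ Set.notMem_empty _)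
  exact ⟨U, himm.2.1, ⟨U', himm, rfl⟩, h.mono himm.2.1 hM (hMU'.trans himm.lt.le)⟩

theorem upperClosed (h : IsRotationMap I M0 RM) (hM : Stable I M) :
    UpperClosed I RM (RM M) := by
  refine ⟨h.subset_rotSet hM, fun r' hr' r _ hdom => ?_⟩
  obtain rfl | hdom := hdom
  · exact hr'
  · obtain ⟨U, hU, hexp, hUM⟩ := h.exists_exposed_of_mem hM hr'
    exact hUM (hdom U hU hexp)

lemma immPred_of_eq_insert (h : IsRotationMap I M0 RM) (hX : Stable I X) (hY : Stable I Y)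
    (hYX : Y ≤ X) (hins : RM Y = insert r (RM X)) (hr : r ∉ RM X) :
    ImmPred I Y X ∧ rho I X Y = r := by
  have hlt : Y < X := hYX.lt_of_ne fun heq => hr (heq ▸ hins ▸ Set.mem_insert r _)
  have himm : ImmPred I Y X := immPred_iff.2 ⟨hY, hX, hlt, fun P hP hYP hPX =>
    (Set.wcovBy_insert r (RM X)).2 (h.ssubset_of_lt hX hP hPX)
      (hins ▸ h.ssubset_of_lt hP hY hYP)⟩
  refine ⟨himm, ?_⟩
  have hrY : r ∈ insert (rho I X Y) (RM X) :=
    (h.eq_insert_of_immPred himm).1 ▸ hins ▸ Set.mem_insert r _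
  exact (hrY.resolve_right hr).symm

lemma exposed_stableSup (h : IsRotationMap I M0 RM) (hX : Stable I X) (hZ : Stable I Z)
    (hrX : Exposed I r X) (hrZ : Exposed I r Z) : Exposed I r (stableSup hX hZ) := by
  obtain ⟨Y, hXY, rfl⟩ := hrX
  obtain ⟨W, hZW, hρ⟩ := hrZ
  have hRM : RM (stableSup hXY.1 hZW.1) = insert (rho I X Y) (RM (stableSup hX hZ)) := by
    rw [h.sup_eq, h.sup_eq, (h.eq_insert_of_immPred hXY).1, (h.eq_insert_of_immPred hZW).1, ← hρ,
      Set.insert_inter_distrib]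
  have hnot : rho I X Y ∉ RM (stableSup hX hZ) := by
    rw [h.sup_eq]
    exact fun hr => (h.eq_insert_of_immPred hXY).2 hr.1
  have hle : stableSup hXY.1 hZW.1 ≤ stableSup hX hZ :=
    stableSup_le _ _ (hXY.lt.le.trans (le_stableSup_left hX hZ))
      (hZW.lt.le.trans (le_stableSup_right hX hZ))
  obtain ⟨himm, hρ'⟩ :=
    h.immPred_of_eq_insert (stableSup_stable hX hZ) (stableSup_stable _ _) hle hRM hnot
  exact ⟨_, himm, hρ'.symm⟩

lemma exists_exposed_forall_subset (h : IsRotationMap I M0 RM) (hr : r ∈ RotSet I) :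
    ∃ W, Stable I W ∧ Exposed I r W ∧
      ∀ X, Stable I X → Exposed I r X → RM W ⊆ RM X := by
  obtain ⟨X, Y, himm, hρ⟩ := hr
  obtain ⟨W, ⟨hW, hWr⟩, hmax⟩ := Set.Finite.exists_maximal
    (s := {X | Stable I X ∧ Exposed I r X}) (Set.toFinite _) ⟨X, himm.2.1, Y, himm, hρ⟩
  refine ⟨W, hW, hWr, fun Z hZ hZr => h.mono hW hZ ?_⟩
  have hsup := hmax ⟨stableSup_stable hW hZ, h.exposed_stableSup hW hZ hWr hZr⟩
    (le_stableSup_left hW hZ)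
  exact (le_stableSup_right hW hZ).trans hsup

lemma exists_eq_rupRot (h : IsRotationMap I M0 RM) (hr : r ∈ RotSet I) :
    ∃ M, Stable I M ∧ RM M = RupRot I RM r := by
  obtain ⟨W, hW, ⟨Y, himm, rfl⟩, hmin⟩ := h.exists_exposed_forall_subset hr
  refine ⟨Y, himm.1, ?_⟩
  rw [(h.eq_insert_of_immPred himm).1]
  ext s
  constructor
  · rintro (rfl | hs)
    · exact ⟨hr, Or.inl rfl⟩
    · exact ⟨h.subset_rotSet hW hs, Or.inr fun X hX hXr => hmin X hX hXr hs⟩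
  · rintro ⟨-, rfl | hs⟩
    · exact Set.mem_insert _ _
    · exact Set.mem_insert_of_mem _ (hs W hW ⟨Y, himm, rfl⟩)

lemma exists_eq_biUnion_rupRot (h : IsRotationMap I M0 RM) (S : Finset (Rot A B))
    (hS : ↑S ⊆ RotSet I) : ∃ M, Stable I M ∧ RM M = ⋃ r ∈ S, RupRot I RM r := by
  induction S using Finset.induction_on with
  | empty => exact ⟨M0, h.stable_top, by simp [h.top_eq_empty]⟩
  | insert r S _ ih =>
    obtain ⟨M, hM, hMS⟩ := ih fun x hx => hS (mem_insert_of_mem hx)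
    obtain ⟨N, hN, hNr⟩ := h.exists_eq_rupRot (hS (mem_insert_self r S))
    exact ⟨stableInf hN hM, stableInf_stable hN hM, by
      rw [h.inf_eq, hNr, hMS, set_biUnion_insert]⟩

theorem exists_eq_of_upperClosed (h : IsRotationMap I M0 RM) {R : Set (Rot A B)}
    (hR : UpperClosed I RM R) : ∃ M, Stable I M ∧ RM M = R := by
  obtain ⟨M, hM, hMR⟩ :=
    h.exists_eq_biUnion_rupRot (Set.toFinite R).toFinset (by simpa using hR.1)
  refine ⟨M, hM, hMR.trans (Set.Subset.antisymm ?_ fun s hs => ?_)⟩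
  · simp only [Set.Finite.mem_toFinset, Set.iUnion_subset_iff]
    exact fun r hr s hs => hR.2 r hr s hs.1 hs.2
  · exact Set.mem_biUnion (by simpa using hs) ⟨hR.1 hs, Or.inl rfl⟩

end IsRotationMap

end Rotations

end SM

namespace SM

variable {A B : Type} [Fintype A] [Fintype B] [DecidableEq A] [DecidableEq B]

/-- representation with rotations. -/
theorem stmt3 (I : SchoolInstance A B) (M0 : Matching I)
    (hM0 : Stable I M0 ∧ ∀ N, Stable I N → matGE I M0 N)
    (RM : Matching I → Set (Rot A B))
    (hRM : ∀ M c, Stable I M → chainTo I M0 M c → RM M = chainRots I c) :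
    (∀ M, Stable I M → UpperClosed I RM (RM M)) ∧
    (∀ R : Set (Rot A B), UpperClosed I RM R → ∃! M, Stable I M ∧ RM M = R) ∧
    (∀ M M', Stable I M → Stable I M' →
      (∀ N, IsMeet I M M' N → RM N = RM M ∪ RM M') ∧
      (∀ N, IsJoin I M M' N → RM N = RM M ∩ RM M')) := by
  have h : IsRotationMap I M0 RM :=
    ⟨hM0.1, fun N hN => matGE_iff_le.1 (hM0.2 N hN), hRM⟩
  refine ⟨fun M hM => h.upperClosed hM, fun R hR => ?_,
    fun M M' hM hM' => ⟨fun N hN => ?_, fun N hN => ?_⟩⟩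
  · obtain ⟨M, hM, hMR⟩ := h.exists_eq_of_upperClosed hR
    exact ⟨M, ⟨hM, hMR⟩, fun N hN => h.injective hN.1 hM (hN.2.trans hMR.symm)⟩
  · rw [hN.eq_stableInf hM hM', h.inf_eq]
  · rw [hN.eq_stableSup hM hM', h.sup_eq]

end SM
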